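/- Let θ ∈ ℝ with sin θ ≠ 0, and for i ∈ {1, −1} let f_i be the rotation of angle θ about (i, 0). Let p₁ = (cos θ, −sin θ), p₂ = (−cos θ − 2, sin θ), and q = (1, 0). Then p₁ ≠ p₂; for each j ∈ {1, 2} the three points p_j, f₁(p_j), f₋₁(p_j) are affinely independent and q is equidistant from them (so q is their circumcenter). Consequently, the map assigning to each point p off the x-axis the circumcenter of p, f₁(p), f₋₁(p) is not injective. -/

import Mathlib

open Real

/-- The point of the Euclidean plane with coordinates `(a, b)`. -/
noncomputable def pt (a b : ℝ) : EuclideanSpace ℝ (Fin 2) :=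
  (WithLp.equiv 2 (Fin 2 → ℝ)).symm ![a, b]

/-- The rotation of angle `θ` about the point `c`. -/
noncomputable def rot (θ : ℝ) (c p : EuclideanSpace ℝ (Fin 2)) : EuclideanSpace ℝ (Fin 2) :=
  pt (c 0 + ((p 0 - c 0) * Real.cos θ - (p 1 - c 1) * Real.sin θ))
     (c 1 + ((p 0 - c 0) * Real.sin θ + (p 1 - c 1) * Real.cos θ))

@[simp] lemma pt_apply_zero (a b : ℝ) : pt a b 0 = a := rfl
@[simp] lemma pt_apply_one (a b : ℝ) : pt a b 1 = b := rfl

lemma pt_ext {x : EuclideanSpace ℝ (Fin 2)} {a b : ℝ} (h0 : x 0 = a) (h1 : x 1 = b) :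
    x = pt a b := by
  ext i
  fin_cases i <;> simpa

lemma dist_pt (a b c d : ℝ) : dist (pt a b) (pt c d) = Real.sqrt ((a - c) ^ 2 + (b - d) ^ 2) := by
  rw [EuclideanSpace.dist_eq, Fin.sum_univ_two]
  simp [Real.dist_eq, sq_abs]

lemma dist_pt' (x : EuclideanSpace ℝ (Fin 2)) (c d : ℝ) :
    dist x (pt c d) = Real.sqrt ((x 0 - c) ^ 2 + (x 1 - d) ^ 2) := by
  rw [show x = pt (x 0) (x 1) from pt_ext rfl rfl, dist_pt]
  simp

lemma affind (a b c : EuclideanSpace ℝ (Fin 2))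
    (h : (b 0 - a 0) * (c 1 - a 1) - (b 1 - a 1) * (c 0 - a 0) ≠ 0) :
    AffineIndependent ℝ ![a, b, c] := by
  rw [affineIndependent_iff_not_collinear_set]
  intro hcol
  rw [collinear_iff_of_mem (Set.mem_insert a _)] at hcol
  obtain ⟨v, hv⟩ := hcol
  obtain ⟨r, hr⟩ := hv b (by simp)
  obtain ⟨s, hs⟩ := hv c (by simp)
  apply h
  have hb0 : b 0 = r * v 0 + a 0 := by rw [hr]; rfl
  have hb1 : b 1 = r * v 1 + a 1 := by rw [hr]; rfl
  have hc0 : c 0 = s * v 0 + a 0 := by rw [hs]; rfl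
  have hc1 : c 1 = s * v 1 + a 1 := by rw [hs]; rfl
  rw [hb0, hb1, hc0, hc1]; ring

theorem stmt4 (θ : ℝ) (hθ : sin θ ≠ 0)
    (p₁ p₂ q : EuclideanSpace ℝ (Fin 2))
    (hp₁ : p₁ = pt (cos θ) (-sin θ)) (hp₂ : p₂ = pt (-cos θ - 2) (sin θ))
    (hq : q = pt 1 0) :
    p₁ ≠ p₂ ∧
    (AffineIndependent ℝ ![p₁, rot θ (pt 1 0) p₁, rot θ (pt (-1) 0) p₁] ∧
      dist q p₁ = dist q (rot θ (pt 1 0) p₁) ∧ dist q p₁ = dist q (rot θ (pt (-1) 0) p₁)) ∧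
    (AffineIndependent ℝ ![p₂, rot θ (pt 1 0) p₂, rot θ (pt (-1) 0) p₂] ∧
      dist q p₂ = dist q (rot θ (pt 1 0) p₂) ∧ dist q p₂ = dist q (rot θ (pt (-1) 0) p₂)) ∧
    ∀ C : EuclideanSpace ℝ (Fin 2) → EuclideanSpace ℝ (Fin 2),
      (∀ p : EuclideanSpace ℝ (Fin 2), p 1 ≠ 0 →
        dist (C p) p = dist (C p) (rot θ (pt 1 0) p) ∧
        dist (C p) p = dist (C p) (rot θ (pt (-1) 0) p)) →
      ¬ Set.InjOn C {p : EuclideanSpace ℝ (Fin 2) | p 1 ≠ 0} := by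
  have pyth := sin_sq_add_cos_sq θ
  have hcos : cos θ ≠ 1 := by
    intro h
    apply hθ
    nlinarith [sq_nonneg (sin θ)]
  subst hp₁ hp₂ hq
  -- explicit images of the rotations
  have e1 : rot θ (pt 1 0) (pt (cos θ) (-sin θ)) = pt (2 - cos θ) (-sin θ) := by
    apply pt_ext <;> simp [rot] <;> nlinarith
  have e2 : rot θ (pt (-1) 0) (pt (cos θ) (-sin θ)) = pt (cos θ) (sin θ) := by
    apply pt_ext <;> simp [rot] <;> nlinarith
  have e3 : rot θ (pt 1 0) (pt (-cos θ - 2) (sin θ)) = pt (-3 * cos θ) (-3 * sin θ) := by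
    apply pt_ext <;> simp [rot] <;> nlinarith
  have e4 : rot θ (pt (-1) 0) (pt (-cos θ - 2) (sin θ)) = pt (-cos θ - 2) (-sin θ) := by
    apply pt_ext <;> simp [rot] <;> nlinarith
  refine ⟨?_, ⟨?_, ?_, ?_⟩, ⟨?_, ?_, ?_⟩, ?_⟩
  · intro h
    have := congrArg (fun v : EuclideanSpace ℝ (Fin 2) => v 1) h
    simp at this
    exact hθ (by linarith)
  · rw [e1, e2]
    apply affind
    simp only [pt_apply_zero, pt_apply_one]
    intro h
    apply hθ
    have : (2 - 2 * cos θ) * (2 * sin θ) = 0 := by linarith [h]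
    rcases mul_eq_zero.1 this with h' | h'
    · exact absurd (by linarith) hcos
    · linarith
  · rw [e1, dist_pt, dist_pt]
    congr 1
    ring
  · rw [e2, dist_pt, dist_pt]
    congr 1
    ring
  · rw [e3, e4]
    apply affind
    simp only [pt_apply_zero, pt_apply_one]
    intro h
    apply hθ
    have : (2 - 2 * cos θ) * (-2 * sin θ) = 0 := by nlinarith [h]
    rcases mul_eq_zero.1 this with h' | h'
    · exact absurd (by linarith) hcos
    · linarith
  · rw [e3, dist_pt, dist_pt]
    congr 1
    nlinarith
  · rw [e4, dist_pt, dist_pt]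
    congr 1
    ring
  · intro C hC hinj
    have h1 := hC (pt (cos θ) (-sin θ)) (by simpa using neg_ne_zero.2 hθ)
    have h2 := hC (pt (-cos θ - 2) (sin θ)) (by simpa using hθ)
    rw [e1, e2] at h1
    rw [e3, e4] at h2
    -- from distance equalities, derive the coordinates of C p₁ and C p₂
    have sq_of_dist : ∀ (x : EuclideanSpace ℝ (Fin 2)) (a b c d : ℝ),
        dist x (pt a b) = dist x (pt c d) →
        (x 0 - a) ^ 2 + (x 1 - b) ^ 2 = (x 0 - c) ^ 2 + (x 1 - d) ^ 2 := by
      intro x a b c d h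
      rw [dist_pt', dist_pt'] at h
      have h1 : (x 0 - a) ^ 2 + (x 1 - b) ^ 2 = Real.sqrt ((x 0 - a) ^ 2 + (x 1 - b) ^ 2) ^ 2 :=
        (Real.sq_sqrt (by positivity)).symm
      rw [h1, h, Real.sq_sqrt (by positivity)]
    have k1a := sq_of_dist _ _ _ _ _ h1.1
    have k1b := sq_of_dist _ _ _ _ _ h1.2
    have k2a := sq_of_dist _ _ _ _ _ h2.1
    have k2b := sq_of_dist _ _ _ _ _ h2.2
    set x := C (pt (cos θ) (-sin θ)) with hx
    set y := C (pt (-cos θ - 2) (sin θ)) with hy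
    have hx1 : x 1 = 0 := by
      have : 4 * x 1 * sin θ = 0 := by linear_combination k1b
      rcases mul_eq_zero.1 this with h' | h'
      · linarith
      · exact absurd h' hθ
    have hx0 : x 0 = 1 := by
      have : (x 0 - 1) * (4 - 4 * cos θ) = 0 := by linear_combination k1a
      rcases mul_eq_zero.1 this with h' | h'
      · linarith
      · exact absurd (by linarith) hcos
    have hy1 : y 1 = 0 := by
      have : 4 * y 1 * sin θ = 0 := by linear_combination -k2b
      rcases mul_eq_zero.1 this with h' | h'
      · linarith
      · exact absurd h' hθ
    have hy0 : y 0 = 1 := by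
      have : (y 0 - 1) * (4 - 4 * cos θ) = 0 := by
        linear_combination k2a + 8 * sin θ * hy1 + 8 * pyth
      rcases mul_eq_zero.1 this with h' | h'
      · linarith
      · exact absurd (by linarith) hcos
    have hxy : x = y := by
      rw [pt_ext hx0 hx1, pt_ext hy0 hy1]
    have := hinj (show pt (cos θ) (-sin θ) ∈ {p : EuclideanSpace ℝ (Fin 2) | p 1 ≠ 0} by
        simpa using neg_ne_zero.2 hθ)
      (show pt (-cos θ - 2) (sin θ) ∈ {p : EuclideanSpace ℝ (Fin 2) | p 1 ≠ 0} by simpa using hθ)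
      hxy
    have h1 := congrArg (fun v : EuclideanSpace ℝ (Fin 2) => v 1) this
    simp at h1
    exact hθ (by linarith)
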